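/- Let S and T be simple, locally finite hypergraphs. If there is a graph isomorphism from some connected component Γ_S(s) of Γ_S to some connected component Γ_T(t) of Γ_T, then the hypergraphs S and T are isomorphic. -/

import Mathlib

open scoped symmDiff

variable {V : Type*}

def Indep (E : Set (Finset V)) (s : Set V) : Prop := ∀ e ∈ E, ¬ ((e : Set V) ⊆ s)

def SimpleHG (E : Set (Finset V)) : Prop :=
  (∀ e ∈ E, 1 < e.card) ∧ ∀ e ∈ E, ∀ e' ∈ E, e ⊆ e' → e = e'

def LocFin (E : Set (Finset V)) : Prop := ∀ v : V, {e ∈ E | v ∈ e}.Finite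

def Nbr (E : Set (Finset V)) (v w : V) : Prop := ∃ e ∈ E, v ∈ e ∧ w ∈ e

def Gamma (E : Set (Finset V)) : SimpleGraph {s : Set V // Indep E s} where
  Adj s t := ∃ v, s.1 ∆ t.1 = {v}
  symm := ⟨fun s t ⟨v, h⟩ => ⟨v, by rwa [symmDiff_comm]⟩⟩
  loopless := ⟨fun s ⟨v, h⟩ => by
    rw [symmDiff_self] at h
    exact absurd h.symm (Set.singleton_ne_empty v)⟩

def Comp (E : Set (Finset V)) (s : Set V) : Set {t : Set V // Indep E t} :=
  {t | (s ∆ t.1).Finite}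

def GammaComp (E : Set (Finset V)) (s : Set V) : SimpleGraph (Comp E s) :=
  (Gamma E).induce (Comp E s)

def xset (E : Set (Finset V)) (s : Set V) (v : V) : Set V :=
  s \ insert v {w | Nbr E v w}

def yset (E : Set (Finset V)) (s : Set V) (v : V) : Set V :=
  insert v (xset E s v)

def IsIsoHG {V W : Type*} (ES : Set (Finset V)) (ET : Set (Finset W)) (f : V → W) : Prop :=
  Function.Bijective f ∧ ∀ e : Finset V, e ∈ ES ↔ ∃ e' ∈ ET, (e' : Set W) = f '' (e : Set V)

/-!
An edge of `Γ_S` adds or removes a single vertex. In a square `X, X + v, X + w, X + v + w`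
opposite edges move the same vertex, and so do their images under an isomorphism `φ`, since the
image is again a 4-cycle. Two edges moving `v` are joined by a ladder of such squares inside the
component, so `φ` turns every `v`-edge into an `f v`-edge for a single vertex `f v`; every `v` moves
along some edge (delete `v` and its neighbours from `s`, then add `v`). Doing the same for `φ⁻¹`
shows that `f` is a bijection, and telescoping along paths gives `φ X ∆ φ Y = f '' (X ∆ Y)`.
Hence `f` and `f⁻¹` preserve independence of finite sets, and in a simple hypergraph the edges are
the minimal dependent finite sets.
-/

section SetLemmas

variable {α : Type*}

theorem Set.Finite.induction_between {P : Set α → Prop} {X Y : Set α} (hXY : X ⊆ Y)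
    (hfin : (Y \ X).Finite) (base : P X)
    (step : ∀ Z w, X ⊆ Z → Z ⊆ Y → w ∈ Y → w ∉ Z → P Z → P (insert w Z)) : P Y := by
  have key : P (X ∪ (Y \ X)) := by
    refine Set.Finite.induction_on_subset (motive := fun D _ => P (X ∪ D)) _ hfin
      (by simpa using base) ?_
    intro w D hw hD hwD ih
    rw [Set.union_insert]
    exact step _ w Set.subset_union_left (Set.union_subset hXY (hD.trans Set.sdiff_subset))
      hw.1 (fun h => h.elim hw.2 hwD) ih
  rwa [Set.union_sdiff_cancel hXY] at key

theorem Set.symmDiff_insert_self {X : Set α} {v : α} (h : v ∉ X) : X ∆ insert v X = {v} := by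
  ext z
  by_cases hz : z = v <;> simp [Set.mem_symmDiff, hz, h]

theorem Set.eq_insert_or_eq_insert_of_symmDiff_eq_singleton {X Y : Set α} {v : α}
    (h : X ∆ Y = {v}) :
    (v ∉ X ∧ Y = insert v X) ∨ (v ∉ Y ∧ X = insert v Y) := by
  obtain rfl : Y = X ∆ {v} := by rw [← h, symmDiff_symmDiff_cancel_left]
  by_cases hv : v ∈ X
  · refine Or.inr ⟨by simp [Set.mem_symmDiff, hv], ?_⟩
    ext z
    by_cases hz : z = v <;> simp [Set.mem_symmDiff, hz, hv]
  · refine Or.inl ⟨hv, ?_⟩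
    ext z
    by_cases hz : z = v <;> simp [Set.mem_symmDiff, hz, hv]

theorem Set.eq_of_symmDiff_square {A B C D : Set α} {p q r u : α} (hAB : A ∆ B = {p})
    (hCD : C ∆ D = {r}) (hAC : A ∆ C = {q}) (hBD : B ∆ D = {u}) (hBC : B ≠ C) (hAD : A ≠ D) :
    p = r := by
  by_contra hpr
  have key : ({p} : Set α) ∆ {r} = {q} ∆ {u} := by
    rw [← hAB, ← hCD, ← hAC, ← hBD, symmDiff_symmDiff_symmDiff_comm]
  have hp : p ∈ ({q} : Set α) ∆ {u} := key ▸ by simp [Set.mem_symmDiff, hpr]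
  rcases Set.mem_symmDiff.mp hp with ⟨hpq, -⟩ | ⟨hpu, -⟩
  · rw [Set.mem_singleton_iff.mp hpq] at hAB
    exact hBC (symmDiff_right_injective A (hAB.trans hAC.symm))
  · rw [Set.mem_singleton_iff.mp hpu, ← hBD, symmDiff_comm B] at hAB
    exact hAD (symmDiff_left_injective B hAB)

end SetLemmas

section Hypergraph

variable {E : Set (Finset V)}

theorem Indep.mono {X Y : Set V} (hY : Indep E Y) (hXY : X ⊆ Y) : Indep E X :=
  fun e he hsub => hY e he (hsub.trans hXY)

theorem LocFin.finite_nbr (hlf : LocFin E) (v : V) : {w | Nbr E v w}.Finite := by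
  refine ((hlf v).biUnion fun e _ => e.finite_toSet).subset ?_
  rintro w ⟨e, he, hv, hw⟩
  exact Set.mem_biUnion ⟨he, hv⟩ hw

theorem mem_iff_minimal_not_indep (hE : ∀ e ∈ E, ∀ e' ∈ E, e ⊆ e' → e = e') (e : Finset V) :
    e ∈ E ↔ ¬ Indep E e ∧ ∀ e' ⊂ e, Indep E e' := by
  constructor
  · intro he
    refine ⟨fun h => h e he subset_rfl, fun e' he' d hd hde' => ?_⟩
    have hde : d ⊆ e := (Finset.coe_subset.mp hde').trans he'.subset
    exact he'.ne (Finset.Subset.antisymm he'.subset (hE d hd e he hde ▸ Finset.coe_subset.mp hde'))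
  · rintro ⟨hdep, hmin⟩
    obtain ⟨d, hd, hde⟩ : ∃ d ∈ E, (d : Set V) ⊆ e := by
      simpa [Indep] using hdep
    rcases (Finset.coe_subset.mp hde).eq_or_ssubset with rfl | hlt
    · exact hd
    · exact absurd subset_rfl (hmin d hlt d hd)

theorem isIsoHG_of_indep_iff {W : Type*} {E' : Set (Finset W)}
    (hE : ∀ e ∈ E, ∀ e' ∈ E, e ⊆ e' → e = e') (hE' : ∀ e ∈ E', ∀ e' ∈ E', e ⊆ e' → e = e')
    (σ : V ≃ W) (hσ : ∀ F : Finset V, Indep E F ↔ Indep E' (σ '' F)) : IsIsoHG E E' σ := by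
  have hmap : ∀ F : Finset V, Indep E F ↔ Indep E' (F.map σ.toEmbedding) := by
    simpa using hσ
  refine ⟨σ.bijective, fun e => ?_⟩
  have : e ∈ E ↔ e.map σ.toEmbedding ∈ E' := by
    rw [mem_iff_minimal_not_indep hE, mem_iff_minimal_not_indep hE', hmap]
    refine and_congr_right fun _ => ⟨fun h d hd => ?_, fun h d hd => ?_⟩
    · have hd' : (d.map σ.symm.toEmbedding).map σ.toEmbedding = d := by
        simp [Finset.map_map]
      rw [← hd'] at hd ⊢
      exact (hmap _).mp (h _ (Finset.map_ssubset_map.mp hd))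
    · exact (hmap d).mpr (h _ (Finset.map_ssubset_map.mpr hd))
  rw [this]
  refine ⟨fun h => ⟨_, h, Finset.coe_map _ _⟩, fun ⟨e', he', h⟩ => ?_⟩
  rwa [Finset.coe_injective (h.trans (Finset.coe_map σ.toEmbedding e).symm)] at he'

end Hypergraph

section Component

variable {E : Set (Finset V)} {s X Y : Set V}

def InComp (E : Set (Finset V)) (s X : Set V) : Prop := Indep E X ∧ (s ∆ X).Finite

namespace InComp

theorem finite_symmDiff (hX : InComp E s X) (hY : InComp E s Y) : (X ∆ Y).Finite := by
  refine (hX.2.union hY.2).subset ?_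
  rw [symmDiff_comm s X]
  exact symmDiff_triangle X s Y

theorem of_finite_symmDiff (hX : InComp E s X) (hY : Indep E Y) (h : (X ∆ Y).Finite) :
    InComp E s Y :=
  ⟨hY, (hX.2.union h).subset (symmDiff_triangle s X Y)⟩

theorem mono (hY : InComp E s Y) (hXY : X ⊆ Y) (hfin : (Y \ X).Finite) : InComp E s X :=
  hY.of_finite_symmDiff (hY.1.mono hXY) (by rwa [symmDiff_of_ge hXY])

theorem of_insert {v : V} (h : InComp E s (insert v X)) (hv : v ∉ X) : InComp E s X :=
  h.of_finite_symmDiff (h.1.mono (Set.subset_insert v X))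
    (by rw [symmDiff_comm, Set.symmDiff_insert_self hv]; exact Set.finite_singleton v)

end InComp

theorem not_mem_xset (v : V) : v ∉ xset E s v := fun h => h.2 (Set.mem_insert v _)

theorem inComp_xset (hlf : LocFin E) (hs : Indep E s) (v : V) : InComp E s (xset E s v) := by
  refine ⟨hs.mono Set.sdiff_subset, ((hlf.finite_nbr v).insert v).subset ?_⟩
  rw [xset, symmDiff_of_ge Set.sdiff_subset, sdiff_sdiff_right_self]
  exact Set.inter_subset_right

theorem inComp_yset (hcard : ∀ e ∈ E, 1 < e.card) (hlf : LocFin E) (hs : Indep E s) (v : V) :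
    InComp E s (yset E s v) := by
  refine (inComp_xset hlf hs v).of_finite_symmDiff (fun e he hsub => ?_)
    (by rw [yset, Set.symmDiff_insert_self (not_mem_xset v)]; exact Set.finite_singleton v)
  by_cases hv : v ∈ e
  · obtain ⟨w, hw, hwv⟩ := Finset.exists_mem_ne (hcard e he) v
    rcases hsub hw with hwv' | hwx
    · exact hwv hwv'
    · exact hwx.2 (Set.mem_insert_of_mem _ ⟨e, he, hv, hw⟩)
  · refine (inComp_xset hlf hs v).1 e he fun w hw => ?_
    rcases hsub hw with rfl | hwx
    · exact absurd hw hv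
    · exact hwx

theorem exists_inComp_superset (hlf : LocFin E) (hs : Indep E s) (F : Finset V)
    (hF : Indep E F) : ∃ X, InComp E s X ∧ (F : Set V) ⊆ X := by
  set N := ⋃ v ∈ F, {w | Nbr E v w}
  have hN : N.Finite := F.finite_toSet.biUnion fun v _ => hlf.finite_nbr v
  refine ⟨F ∪ (s \ N), ⟨fun e he hsub => ?_, (F.finite_toSet.union hN).subset ?_⟩,
    Set.subset_union_left⟩
  · by_cases hmeet : ∃ v ∈ e, v ∈ F
    · obtain ⟨v, hve, hvF⟩ := hmeet
      obtain ⟨w, hwe, hwF⟩ := Set.not_subset.mp (hF e he)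
      exact ((hsub hwe).resolve_left hwF).2 (Set.mem_biUnion hvF ⟨e, he, hve, hwe⟩)
    · push Not at hmeet
      exact hs e he fun w hw => ((hsub hw).resolve_left (hmeet w hw)).1
  · rintro z (⟨hzs, hzX⟩ | ⟨hzX, hzs⟩)
    · exact Or.inr (by_contra fun hzN => hzX (Or.inr ⟨hzs, hzN⟩))
    · exact Or.inl (hzX.resolve_right fun h => hzs h.1)

end Component

section Transfer

variable {W : Type*} {E : Set (Finset V)} {E' : Set (Finset W)} {s X Y : Set V} {t : Set W}
  (φ : GammaComp E s ≃g GammaComp E' t)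

open Classical in
/-- `φ` as a map of vertex sets; off the component of `s` its value is junk. -/
noncomputable def setMap (X : Set V) : Set W :=
  if h : InComp E s X then (φ ⟨⟨X, h.1⟩, h.2⟩).1.1 else ∅

theorem setMap_coe (a : Comp E s) : setMap φ a.1.1 = (φ a).1.1 := by
  rw [setMap, dif_pos ⟨a.1.2, a.2⟩]

theorem inComp_setMap (hX : InComp E s X) : InComp E' t (setMap φ X) := by
  rw [setMap, dif_pos hX]
  exact ⟨(φ _).1.2, (φ _).2⟩

theorem setMap_symm_setMap (hX : InComp E s X) : setMap φ.symm (setMap φ X) = X := by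
  rw [setMap_coe φ ⟨⟨X, hX.1⟩, hX.2⟩, setMap_coe, RelIso.symm_apply_apply]

theorem setMap_injOn (hX : InComp E s X) (hY : InComp E s Y) (h : setMap φ X = setMap φ Y) :
    X = Y := by
  rw [← setMap_symm_setMap φ hX, h, setMap_symm_setMap φ hY]

theorem exists_setMap_symmDiff_eq_singleton (hX : InComp E s X) (hY : InComp E s Y) {v : V}
    (h : X ∆ Y = {v}) : ∃ w, setMap φ X ∆ setMap φ Y = {w} := by
  rw [setMap_coe φ ⟨⟨X, hX.1⟩, hX.2⟩, setMap_coe φ ⟨⟨Y, hY.1⟩, hY.2⟩]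
  exact φ.map_rel_iff.mpr ⟨v, h⟩

theorem setMap_square {v w : V} (h : InComp E s (insert v (insert w X))) (hv : v ∉ X)
    (hw : w ∉ X) (hvw : v ≠ w) :
    setMap φ X ∆ setMap φ (insert v X) =
      setMap φ (insert w X) ∆ setMap φ (insert v (insert w X)) := by
  have hwv : w ∉ insert v X := by simp [hw, hvw.symm]
  have hvw' : v ∉ insert w X := by simp [hv, hvw]
  have hcomm : insert v (insert w X) = insert w (insert v X) := Set.insert_comm v w X
  have hC := h.of_insert hvw'
  have hA := hC.of_insert hw
  have hB := (hcomm ▸ h).of_insert hwv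
  obtain ⟨p, hp⟩ := exists_setMap_symmDiff_eq_singleton φ hA hB (Set.symmDiff_insert_self hv)
  obtain ⟨r, hr⟩ := exists_setMap_symmDiff_eq_singleton φ hC h (Set.symmDiff_insert_self hvw')
  obtain ⟨q, hq⟩ := exists_setMap_symmDiff_eq_singleton φ hA hC (Set.symmDiff_insert_self hw)
  obtain ⟨u, hu⟩ := exists_setMap_symmDiff_eq_singleton φ hB h
    (by rw [hcomm]; exact Set.symmDiff_insert_self hwv)
  rw [hp, hr, Set.eq_of_symmDiff_square hp hr hq hu ?_ ?_]
  · exact fun hBC => hvw' (setMap_injOn φ hB hC hBC ▸ Set.mem_insert v X)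
  · exact fun hAD => hv (setMap_injOn φ hA h hAD ▸ Set.mem_insert v _)

theorem setMap_symmDiff_insert_eq_of_subset {v : V} (hY : InComp E s (insert v Y)) (hvY : v ∉ Y)
    (hXY : X ⊆ Y) (hfin : (Y \ X).Finite) :
    setMap φ X ∆ setMap φ (insert v X) = setMap φ Y ∆ setMap φ (insert v Y) := by
  refine hfin.induction_between (P := fun Z => setMap φ X ∆ setMap φ (insert v X) =
    setMap φ Z ∆ setMap φ (insert v Z)) hXY rfl fun Z w hXZ hZY hwY hwZ ih =>
      ih.trans (setMap_square φ ?_ (fun h => hvY (hZY h)) hwZ fun h => hvY (h ▸ hwY))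
  refine hY.mono (Set.insert_subset_insert (Set.insert_subset hwY hZY))
    (hfin.subset fun z hz => ?_)
  simp only [Set.mem_sdiff, Set.mem_insert_iff, not_or] at hz ⊢
  obtain ⟨hzv | hzY, hzv', -, hzZ⟩ := hz
  · exact absurd hzv hzv'
  · exact ⟨hzY, fun hzX => hzZ (hXZ hzX)⟩

theorem setMap_symmDiff_insert_eq {v : V} (hX : InComp E s (insert v X))
    (hY : InComp E s (insert v Y)) (hvX : v ∉ X) (hvY : v ∉ Y) :
    setMap φ X ∆ setMap φ (insert v X) = setMap φ Y ∆ setMap φ (insert v Y) := by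
  have hfin := (hX.of_insert hvX).finite_symmDiff (hY.of_insert hvY)
  rw [← setMap_symmDiff_insert_eq_of_subset φ hX hvX Set.inter_subset_left
      (hfin.subset fun z hz => Or.inl ⟨hz.1, fun h => hz.2 ⟨hz.1, h⟩⟩),
    setMap_symmDiff_insert_eq_of_subset φ hY hvY Set.inter_subset_right
      (hfin.subset fun z hz => Or.inr ⟨hz.1, fun h => hz.2 ⟨h, hz.1⟩⟩)]

def IsInducedMap (f : V → W) : Prop :=
  ∀ ⦃X Y v⦄, InComp E s X → InComp E s Y → X ∆ Y = {v} → setMap φ X ∆ setMap φ Y = {f v}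

theorem exists_isInducedMap (hcard : ∀ e ∈ E, 1 < e.card) (hlf : LocFin E) (hs : Indep E s) :
    ∃ f : V → W, IsInducedMap φ f := by
  choose f hf using fun v => exists_setMap_symmDiff_eq_singleton φ (inComp_xset hlf hs v)
    (inComp_yset hcard hlf hs v) (Set.symmDiff_insert_self (not_mem_xset v))
  have key : ∀ X v, InComp E s (insert v X) → v ∉ X →
      setMap φ X ∆ setMap φ (insert v X) = {f v} := fun X v hX hv =>
    (setMap_symmDiff_insert_eq φ hX (inComp_yset hcard hlf hs v) hv (not_mem_xset v)).trans (hf v)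
  refine ⟨f, fun X Y v hX hY h => ?_⟩
  rcases Set.eq_insert_or_eq_insert_of_symmDiff_eq_singleton h with ⟨hv, rfl⟩ | ⟨hv, rfl⟩
  · exact key X v hY hv
  · rw [symmDiff_comm]
    exact key Y v hX hv

namespace IsInducedMap

variable {φ} {f : V → W}

theorem leftInverse {g : W → V} (hf : IsInducedMap φ f) (hg : IsInducedMap φ.symm g)
    (hcard : ∀ e ∈ E, 1 < e.card) (hlf : LocFin E) (hs : Indep E s) : Function.LeftInverse g f := by
  intro v
  have hx := inComp_xset hlf hs v
  have hy := inComp_yset hcard hlf hs v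
  have hxy : xset E s v ∆ yset E s v = {v} := Set.symmDiff_insert_self (not_mem_xset v)
  have h := hg (inComp_setMap φ hx) (inComp_setMap φ hy) (hf hx hy hxy)
  rw [setMap_symm_setMap φ hx, setMap_symm_setMap φ hy, hxy] at h
  exact (Set.singleton_eq_singleton_iff.mp h).symm

theorem setMap_symmDiff_of_subset (hf : IsInducedMap φ f) (hinj : f.Injective)
    (hY : InComp E s Y) (hXY : X ⊆ Y) (hfin : (Y \ X).Finite) :
    setMap φ X ∆ setMap φ Y = f '' (X ∆ Y) := by
  refine hfin.induction_between (P := fun Z => setMap φ X ∆ setMap φ Z = f '' (X ∆ Z)) hXY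
    (by simp) fun Z w hXZ hZY hwY hwZ ih => ?_
  have hZ : InComp E s Z := hY.mono hZY (hfin.subset (Set.sdiff_subset_sdiff_right hXZ))
  have hZw : InComp E s (insert w Z) := hY.mono (Set.insert_subset hwY hZY)
    (hfin.subset fun z hz => ⟨hz.1, fun h => hz.2 (Set.mem_insert_of_mem _ (hXZ h))⟩)
  have hstep := Set.symmDiff_insert_self hwZ
  calc setMap φ X ∆ setMap φ (insert w Z)
      = (setMap φ X ∆ setMap φ Z) ∆ (setMap φ Z ∆ setMap φ (insert w Z)) := by
        rw [symmDiff_assoc, symmDiff_symmDiff_cancel_left]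
    _ = (f '' (X ∆ Z)) ∆ (f '' (Z ∆ insert w Z)) := by
        rw [ih, hf hZ hZw hstep, hstep, Set.image_singleton]
    _ = f '' (X ∆ insert w Z) := by
        rw [← Set.image_symmDiff hinj, symmDiff_assoc, symmDiff_symmDiff_cancel_left]

theorem setMap_symmDiff (hf : IsInducedMap φ f) (hinj : f.Injective) (hX : InComp E s X)
    (hY : InComp E s Y) : setMap φ X ∆ setMap φ Y = f '' (X ∆ Y) := by
  have hfin := hX.finite_symmDiff hY
  have hMX := hf.setMap_symmDiff_of_subset hinj hX Set.inter_subset_left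
    (hfin.subset fun z hz => Or.inl ⟨hz.1, fun h => hz.2 ⟨hz.1, h⟩⟩)
  have hMY := hf.setMap_symmDiff_of_subset hinj hY Set.inter_subset_right
    (hfin.subset fun z hz => Or.inr ⟨hz.1, fun h => hz.2 ⟨h, hz.1⟩⟩)
  calc setMap φ X ∆ setMap φ Y
      = (setMap φ (X ∩ Y) ∆ setMap φ X) ∆ (setMap φ (X ∩ Y) ∆ setMap φ Y) := by
        rw [symmDiff_symmDiff_symmDiff_comm, symmDiff_self, bot_symmDiff]
    _ = f '' (X ∆ Y) := by
        rw [hMX, hMY, ← Set.image_symmDiff hinj, symmDiff_symmDiff_symmDiff_comm, symmDiff_self,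
          bot_symmDiff]

/-- Take `X ⊇ F` in the component and rebuild `X` on `F` so that its image contains `f '' F`. -/
theorem indep_image (hf : IsInducedMap φ f) (hinj : f.Injective) (hlf : LocFin E)
    (hs : Indep E s) (F : Finset V) (hF : Indep E F) : Indep E' (f '' F) := by
  obtain ⟨X, hX, hFX⟩ := exists_inComp_superset hlf hs F hF
  set A := X \ F
  set S := {v ∈ (F : Set V) | f v ∉ setMap φ A}
  have hA : InComp E s A := hX.mono Set.sdiff_subset
    (F.finite_toSet.subset (by rw [sdiff_sdiff_right_self]; exact Set.inter_subset_right))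
  have hB : InComp E s (A ∪ S) :=
    hX.mono (Set.union_subset Set.sdiff_subset ((Set.sep_subset _ _).trans hFX))
    (F.finite_toSet.subset fun z hz => by_contra fun hzF => hz.2 (Or.inl ⟨hz.1, hzF⟩))
  have hAS : A ∆ (A ∪ S) = S := by
    ext z
    simp only [A, S, Set.mem_symmDiff, Set.mem_union, Set.mem_sdiff, Set.mem_ofPred_eq]
    tauto
  have himage := hf.setMap_symmDiff hinj hA hB
  rw [hAS] at himage
  refine (inComp_setMap φ hB).1.mono ?_
  rintro _ ⟨v, hv, rfl⟩
  rw [← symmDiff_symmDiff_cancel_left (setMap φ A) (setMap φ (A ∪ S)), himage]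
  by_cases hvA : f v ∈ setMap φ A
  · exact Or.inl ⟨hvA, fun ⟨u, hu, huv⟩ => hu.2 (hinj huv ▸ hvA)⟩
  · exact Or.inr ⟨⟨v, ⟨hv, hvA⟩, rfl⟩, hvA⟩

end IsInducedMap

end Transfer

theorem stmt7 {VS VT : Type*} (ES : Set (Finset VS)) (ET : Set (Finset VT))
    (hSsimp : SimpleHG ES) (hTsimp : SimpleHG ET) (hSlf : LocFin ES) (hTlf : LocFin ET)
    (s : Set VS) (t : Set VT) (hs : Indep ES s) (ht : Indep ET t)
    (h : Nonempty (GammaComp ES s ≃g GammaComp ET t)) :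
    ∃ f : VS → VT, IsIsoHG ES ET f := by
  obtain ⟨φ⟩ := h
  obtain ⟨f, hf⟩ := exists_isInducedMap φ hSsimp.1 hSlf hs
  obtain ⟨g, hg⟩ := exists_isInducedMap φ.symm hTsimp.1 hTlf ht
  have hgf : ∀ v, g (f v) = v := hf.leftInverse hg hSsimp.1 hSlf hs
  let σ : VS ≃ VT := ⟨f, g, hgf, hg.leftInverse hf hTsimp.1 hTlf ht⟩
  refine ⟨σ, isIsoHG_of_indep_iff hSsimp.2 hTsimp.2 σ fun F =>
    ⟨hf.indep_image σ.injective hSlf hs F, fun hF => ?_⟩⟩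
  have := hg.indep_image σ.symm.injective hTlf ht (F.map σ.toEmbedding) (by simpa using hF)
  simpa [Set.image_image, σ, hgf] using this
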